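/- (Weight-rounding lemma.) Let ℓ = k·g with k, g ≥ 1, let w : Fin ℓ → ℝ be nondecreasing weights with 0 < w i ≤ 1, and let w̃ be the rounded weights obtained by partitioning Fin ℓ into k consecutive groups of g items each and raising every weight in a group to the weight of the largest-indexed item of that group. Let F' be a maximum-cardinality subset of Fin ℓ that is packable into m unit-capacity bins under w̃, and let F be a maximum-cardinality subset of Fin ℓ that is packable into m unit-capacity bins under w. Then F' is packable into m unit-capacity bins under the original weights w, and |F'| ≥ |F| − g. -/

import Mathlib

/-! Rounding up only increases weights, so a `w̃`-packing is also a `w`-packing. Conversely,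
shifting the items of a `w`-packing down by `g` positions yields a `w̃`-packing in the same bins:
the rounded weight of item `i - g` is the weight of an item of index below `i`, hence at most
`w i` by monotonicity. Only the fewer than `g` items of index below `g` are lost in the shift. -/

open Finset

/-- `T` is packable into `m` unit-capacity bins under weights `u`. -/
def Packable {N : ℕ} (u : Fin N → ℝ) (m : ℕ) (T : Finset (Fin N)) : Prop :=
  ∃ p : Fin N → Fin m, ∀ j : Fin m, ∑ i ∈ T.filter (fun i => p i = j), u i ≤ 1

namespace Packable

variable {N m : ℕ} {u v : Fin N → ℝ} {S T : Finset (Fin N)}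

theorem of_le (hS : Packable v m S) (huv : ∀ i, u i ≤ v i) : Packable u m S := by
  obtain ⟨p, hp⟩ := hS
  exact ⟨p, fun j => (sum_le_sum fun i _ => huv i).trans (hp j)⟩

theorem subset (hS : Packable u m S) (hTS : T ⊆ S) (hu : ∀ i ∈ S, 0 ≤ u i) :
    Packable u m T := by
  obtain ⟨p, hp⟩ := hS
  refine ⟨p, fun j => le_trans ?_ (hp j)⟩
  exact sum_le_sum_of_subset_of_nonneg (filter_subset_filter _ hTS)
    fun i hi _ => hu i (mem_filter.1 hi).1

theorem image {f : Fin N → Fin N} (hS : Packable v m S) (hf : Set.InjOn f S)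
    (huv : ∀ i ∈ S, u (f i) ≤ v i) : Packable u m (S.image f) := by
  classical
  obtain ⟨p, hp⟩ := hS
  let p' : Fin N → Fin m := fun x => if h : ∃ i ∈ S, f i = x then p h.choose else p x
  have hp' : ∀ i ∈ S, p' (f i) = p i := by
    intro i hi
    have h : ∃ i' ∈ S, f i' = f i := ⟨i, hi, rfl⟩
    simp only [p', dif_pos h, hf h.choose_spec.1 hi h.choose_spec.2]
  refine ⟨p', fun j => ?_⟩
  calc ∑ x ∈ (S.image f).filter (fun x => p' x = j), u x
      = ∑ i ∈ S.filter (fun i => p' (f i) = j), u (f i) := by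
        rw [filter_image, sum_image (hf.mono (coe_subset.2 (filter_subset _ _)))]
    _ = ∑ i ∈ S.filter (fun i => p i = j), u (f i) :=
        sum_congr (filter_congr fun i hi => by rw [hp' i hi]) fun _ _ => rfl
    _ ≤ ∑ i ∈ S.filter (fun i => p i = j), v i :=
        sum_le_sum fun i hi => huv i (mem_filter.1 hi).1
    _ ≤ 1 := hp j

end Packable

def Fin.subClamp {N : ℕ} (g : ℕ) (i : Fin N) : Fin N :=
  ⟨i.val - g, (Nat.sub_le _ _).trans_lt i.isLt⟩

theorem Fin.subClamp_injOn {N : ℕ} (g : ℕ) :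
    Set.InjOn (Fin.subClamp (N := N) g) {i | g ≤ i.val} := by
  intro a ha b hb hab
  have := congrArg Fin.val hab
  simp only [Fin.subClamp, Set.mem_ofPred_eq] at ha hb this
  exact Fin.ext (by omega)

theorem Nat.le_div_mul_add_pred (i : ℕ) {g : ℕ} (hg : 0 < g) : i ≤ i / g * g + (g - 1) := by
  have := Nat.div_add_mod' i g
  have := i.mod_lt hg
  omega

theorem Nat.sub_div_mul_add_pred_lt {i g : ℕ} (hg : 0 < g) (hi : g ≤ i) :
    (i - g) / g * g + (g - 1) < i := by
  have := Nat.div_mul_le_self (i - g) g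
  omega

theorem Finset.card_le_card_filter_val_le_add {N : ℕ} (s : Finset (Fin N)) (g : ℕ) :
    s.card ≤ (s.filter (fun i => g ≤ i.val)).card + g := by
  have hsmall : (s.filter (fun i => ¬ g ≤ i.val)).card ≤ g := by
    have hmaps : Set.MapsTo Fin.val (s.filter (fun i => ¬ g ≤ i.val) : Set (Fin N)) (range g) :=
      fun i hi => by
        simp only [coe_filter, Set.mem_ofPred_eq, coe_range, Set.mem_Iio] at hi ⊢
        omega
    simpa using card_le_card_of_injOn Fin.val hmaps Fin.val_injective.injOn
  have := card_filter_add_card_filter_not (s := s) (p := fun i => g ≤ i.val)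
  omega

theorem weight_rounding
    (m k g : ℕ) (hg : 1 ≤ g)
    (w : Fin (k * g) → ℝ)
    (hw : ∀ i, 0 < w i ∧ w i ≤ 1) (hmono : Monotone w)
    (w' : Fin (k * g) → ℝ)
    (hw' : ∀ i : Fin (k * g),
      w' i = w ⟨i.val / g * g + (g - 1), by
        have h1 : i.val < g * k := lt_of_lt_of_eq i.isLt (Nat.mul_comm k g)
        have h2 : i.val / g < k := Nat.div_lt_of_lt_mul h1
        have h3 : (i.val / g + 1) * g ≤ k * g := Nat.mul_le_mul_right g h2
        have h4 : i.val / g * g + 1 * g ≤ k * g := by rw [← Nat.add_mul]; exact h3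
        omega⟩)
    (F' F : Finset (Fin (k * g)))
    (hF'pack : Packable w' m F')
    (hF'max : ∀ T : Finset (Fin (k * g)), Packable w' m T → T.card ≤ F'.card)
    (hFpack : Packable w m F) :
    Packable w m F' ∧ F.card ≤ F'.card + g := by
  have hround : ∀ i, w i ≤ w' i := fun i => by
    rw [hw']
    exact hmono (Fin.le_def.2 (i.val.le_div_mul_add_pred hg))
  have hshift : ∀ i : Fin (k * g), g ≤ i.val → w' (i.subClamp g) ≤ w i := fun i hi => by
    rw [hw']
    exact hmono (Fin.le_def.2 (Nat.sub_div_mul_add_pred_lt hg hi).le)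
  refine ⟨hF'pack.of_le hround, ?_⟩
  set S := F.filter (fun i => g ≤ i.val)
  have hS : Packable w m S := hFpack.subset (filter_subset _ _) fun i _ => (hw i).1.le
  have hinj : Set.InjOn (Fin.subClamp g) (S : Set (Fin (k * g))) :=
    (Fin.subClamp_injOn g).mono fun i hi => (mem_filter.1 hi).2
  have hT := hS.image hinj fun i hi => hshift i (mem_filter.1 hi).2
  calc F.card ≤ S.card + g := F.card_le_card_filter_val_le_add g
    _ = (S.image (Fin.subClamp g)).card + g := by rw [card_image_of_injOn hinj]
    _ ≤ F'.card + g := Nat.add_le_add_right (hF'max _ hT) g
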